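/- (Fueter's theorem.) Let F = u + i·v be holomorphic on the upper half complex plane, and let f : ℍ → ℍ be the function obtained by Fueter's construction, f(p) = u(t,r) + ι(p)·v(t,r). Then on the set of quaternions with nonzero imaginary part, D_l(Δf) = 0 and D_r(Δf) = 0. -/

import Mathlib

open Quaternion

noncomputable section

/-- The basis quaternion `i`. -/
def qi : ℍ[ℝ] := ⟨0,1,0,0⟩
/-- The basis quaternion `j`. -/
def qj : ℍ[ℝ] := ⟨0,0,1,0⟩
/-- The basis quaternion `k`. -/
def qk : ℍ[ℝ] := ⟨0,0,0,1⟩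

/-- Partial derivative of `f : ℍ → ℍ` in the real (`t`) direction. -/
def pt (f : ℍ[ℝ] → ℍ[ℝ]) (p : ℍ[ℝ]) : ℍ[ℝ] := fderiv ℝ f p 1
/-- Partial derivative in the `i` (`x`) direction. -/
def px (f : ℍ[ℝ] → ℍ[ℝ]) (p : ℍ[ℝ]) : ℍ[ℝ] := fderiv ℝ f p qi
/-- Partial derivative in the `j` (`y`) direction. -/
def py (f : ℍ[ℝ] → ℍ[ℝ]) (p : ℍ[ℝ]) : ℍ[ℝ] := fderiv ℝ f p qj
/-- Partial derivative in the `k` (`z`) direction. -/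
def pz (f : ℍ[ℝ] → ℍ[ℝ]) (p : ℍ[ℝ]) : ℍ[ℝ] := fderiv ℝ f p qk

/-- The left Fueter operator `D_l f = ∂f/∂t + i ∂f/∂x + j ∂f/∂y + k ∂f/∂z`. -/
def Dl (f : ℍ[ℝ] → ℍ[ℝ]) (p : ℍ[ℝ]) : ℍ[ℝ] :=
  pt f p + qi * px f p + qj * py f p + qk * pz f p
/-- The right Fueter operator `D_r f = ∂f/∂t + (∂f/∂x) i + (∂f/∂y) j + (∂f/∂z) k`. -/
def Dr (f : ℍ[ℝ] → ℍ[ℝ]) (p : ℍ[ℝ]) : ℍ[ℝ] :=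
  pt f p + px f p * qi + py f p * qj + pz f p * qk
/-- The conjugate left Fueter operator `D̄_l f = ∂f/∂t - i ∂f/∂x - j ∂f/∂y - k ∂f/∂z`. -/
def Dlbar (f : ℍ[ℝ] → ℍ[ℝ]) (p : ℍ[ℝ]) : ℍ[ℝ] :=
  pt f p - qi * px f p - qj * py f p - qk * pz f p
/-- The Laplacian `Δf = ∂²f/∂t² + ∂²f/∂x² + ∂²f/∂y² + ∂²f/∂z²`. -/
def Lap (f : ℍ[ℝ] → ℍ[ℝ]) (p : ℍ[ℝ]) : ℍ[ℝ] :=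
  pt (pt f) p + px (px f) p + py (py f) p + pz (pz f) p

/-- `r = √(x² + y² + z²)`, the norm of the imaginary part of `p`. -/
def rad (p : ℍ[ℝ]) : ℝ := Real.sqrt (p.imI^2 + p.imJ^2 + p.imK^2)
/-- `ι(p) = (x i + y j + z k)/r`, the normalized imaginary part of `p`. -/
def iot (p : ℍ[ℝ]) : ℍ[ℝ] := (rad p)⁻¹ • Quaternion.im p

/-!
Write Fueter's function as `f = u + (v / r) • im q`. For an axial function `α + β • im q` whose
coefficients depend only on `t = re q` and `r = ‖im q‖`, the gradient of each coefficient lies in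
`span {1, im q}`, so `D_l`, `D_r` and `Δ` reduce to the derivatives `∂_t` and `r⁻¹ ∂_r` of the
coefficients; as `im q` commutes with itself, `D_l` and `D_r` agree on such functions. For the
coefficients coming from a holomorphic `F`, the Cauchy–Riemann equations express these derivatives
through `F'` and `F''` and keep them of the same shape. This gives
`Δf = -2 (Im F') / r + 2 W • im q` with `W = r⁻¹ ∂_r (v / r)`, an axial function whose two Fueter
derivatives vanish identically.
-/

open Filter Topology
open scoped RealInnerProductSpace

namespace Fueter

@[simp] lemma qi_re : qi.re = 0 := rfl
@[simp] lemma qi_imI : qi.imI = 1 := rfl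
@[simp] lemma qi_imJ : qi.imJ = 0 := rfl
@[simp] lemma qi_imK : qi.imK = 0 := rfl
@[simp] lemma qj_re : qj.re = 0 := rfl
@[simp] lemma qj_imI : qj.imI = 0 := rfl
@[simp] lemma qj_imJ : qj.imJ = 1 := rfl
@[simp] lemma qj_imK : qj.imK = 0 := rfl
@[simp] lemma qk_re : qk.re = 0 := rfl
@[simp] lemma qk_imI : qk.imI = 0 := rfl
@[simp] lemma qk_imJ : qk.imJ = 0 := rfl
@[simp] lemma qk_imK : qk.imK = 1 := rfl

lemma im_eq_sum_basis (q : ℍ[ℝ]) : q.im = q.imI • qi + q.imJ • qj + q.imK • qk := by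
  ext <;> simp

@[simp] lemma inner_one_left (e : ℍ[ℝ]) : ⟪(1 : ℍ[ℝ]), e⟫ = e.re := by
  simp [Quaternion.inner_def]

@[simp] lemma inner_coe_left (a : ℝ) (e : ℍ[ℝ]) : ⟪(a : ℍ[ℝ]), e⟫ = a * e.re := by
  simp [Quaternion.inner_def]

@[simp] lemma inner_im_left (q e : ℍ[ℝ]) :
    ⟪q.im, e⟫ = q.imI * e.imI + q.imJ * e.imJ + q.imK * e.imK := by
  simp [Quaternion.inner_def]

lemma inner_im_left_eq_inner_im_right (q e : ℍ[ℝ]) : ⟪q.im, e⟫ = ⟪e.im, q⟫ := by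
  simp only [inner_im_left]; ring

lemma norm_sq_eq_sum_sq (q : ℍ[ℝ]) : ‖q‖ ^ 2 = q.re ^ 2 + q.imI ^ 2 + q.imJ ^ 2 + q.imK ^ 2 := by
  rw [sq, ← Quaternion.normSq_eq_norm_mul_self, Quaternion.normSq_def']

lemma rad_sq (q : ℍ[ℝ]) : rad q ^ 2 = q.imI ^ 2 + q.imJ ^ 2 + q.imK ^ 2 :=
  Real.sq_sqrt (by positivity)

lemma rad_eq_norm_im (q : ℍ[ℝ]) : rad q = ‖q.im‖ := by
  rw [← Real.sqrt_sq (norm_nonneg q.im), norm_sq_eq_sum_sq]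
  simp [rad]

lemma rad_ne_zero {q : ℍ[ℝ]} (hq : q.im ≠ 0) : rad q ≠ 0 := by
  simpa [rad_eq_norm_im] using hq

lemma inner_im_self (q : ℍ[ℝ]) : ⟪q.im, q.im⟫ = rad q ^ 2 := by
  rw [real_inner_self_eq_norm_sq, rad_eq_norm_im]

lemma eventually_im_ne_zero {q : ℍ[ℝ]} (hq : q.im ≠ 0) : ∀ᶠ p in 𝓝 q, p.im ≠ 0 :=
  (isOpen_ne_fun Quaternion.continuous_im continuous_const).mem_nhds hq

def imCLM : ℍ[ℝ] →L[ℝ] ℍ[ℝ] := LinearMap.toContinuousLinearMap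
  { toFun := Quaternion.im
    map_add' := Quaternion.im_add
    map_smul' := fun c a => Quaternion.im_smul a c }

@[simp] lemma imCLM_apply (q : ℍ[ℝ]) : imCLM q = q.im := rfl

/-- The gradient of `α` at `q` is `a + b • im q`; for `α` a function of `t = re q` and
`r = ‖im q‖` this says `a = ∂α/∂t` and `b = r⁻¹ ∂α/∂r`. -/
def HasRadialGradientAt (α : ℍ[ℝ] → ℝ) (a b : ℝ) (q : ℍ[ℝ]) : Prop :=
  HasGradientAt α ((a : ℍ[ℝ]) + b • q.im) q

section RadialGradient

variable {α β : ℍ[ℝ] → ℝ} {a b c d : ℝ} {q : ℍ[ℝ]}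

lemma hasRadialGradientAt_iff_hasFDerivAt :
    HasRadialGradientAt α a b q ↔
      HasFDerivAt α (a • innerSL ℝ (1 : ℍ[ℝ]) + b • innerSL ℝ q.im) q := by
  rw [HasRadialGradientAt, hasGradientAt_iff_hasFDerivAt]
  apply iff_of_eq; congr 1; ext e
  simp

namespace HasRadialGradientAt

lemma hasFDerivAt (h : HasRadialGradientAt α a b q) :
    HasFDerivAt α (a • innerSL ℝ (1 : ℍ[ℝ]) + b • innerSL ℝ q.im) q :=
  hasRadialGradientAt_iff_hasFDerivAt.1 h

lemma differentiableAt (h : HasRadialGradientAt α a b q) : DifferentiableAt ℝ α q :=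
  h.hasFDerivAt.differentiableAt

lemma fderiv_apply (h : HasRadialGradientAt α a b q) (e : ℍ[ℝ]) :
    fderiv ℝ α q e = a * e.re + b * ⟪q.im, e⟫ := by
  simp [h.hasFDerivAt.fderiv]

lemma fderiv_one (h : HasRadialGradientAt α a b q) : fderiv ℝ α q 1 = a := by
  simp [h.fderiv_apply]

lemma fderiv_im (h : HasRadialGradientAt α a b q) : fderiv ℝ α q q.im = b * rad q ^ 2 := by
  rw [h.fderiv_apply, inner_im_self]; simp

lemma mul (hα : HasRadialGradientAt α a b q) (hβ : HasRadialGradientAt β c d q) :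
    HasRadialGradientAt (fun p => α p * β p) (α q * c + β q * a) (α q * d + β q * b) q :=
  hasRadialGradientAt_iff_hasFDerivAt.2 <| (hα.hasFDerivAt.mul hβ.hasFDerivAt).congr_fderiv <| by
    ext e; simp; ring

lemma sub (hα : HasRadialGradientAt α a b q) (hβ : HasRadialGradientAt β c d q) :
    HasRadialGradientAt (fun p => α p - β p) (a - c) (b - d) q :=
  hasRadialGradientAt_iff_hasFDerivAt.2 <| (hα.hasFDerivAt.sub hβ.hasFDerivAt).congr_fderiv <| by
    ext e; simp; ring

lemma _root_.HasDerivAt.comp_hasRadialGradientAt {g : ℝ → ℝ} {g' : ℝ} (hg : HasDerivAt g g' (α q))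
    (hα : HasRadialGradientAt α a b q) :
    HasRadialGradientAt (fun p => g (α p)) (g' * a) (g' * b) q :=
  hasRadialGradientAt_iff_hasFDerivAt.2 <| (hg.comp_hasFDerivAt q hα.hasFDerivAt).congr_fderiv <| by
    ext e; simp; ring

lemma const_mul (c : ℝ) (hα : HasRadialGradientAt α a b q) :
    HasRadialGradientAt (fun p => c * α p) (c * a) (c * b) q :=
  by simpa using ((hasDerivAt_id (α q)).const_mul c).comp_hasRadialGradientAt hα

lemma div (hα : HasRadialGradientAt α a b q) (hβ : HasRadialGradientAt β c d q) (hβq : β q ≠ 0) :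
    HasRadialGradientAt (fun p => α p / β p)
      ((a * β q - α q * c) / β q ^ 2) ((b * β q - α q * d) / β q ^ 2) q := by
  have := hα.mul ((hasDerivAt_inv hβq).comp_hasRadialGradientAt hβ)
  simp only [← div_eq_mul_inv] at this
  convert this using 1 <;> field_simp <;> ring

lemma neg (hα : HasRadialGradientAt α a b q) : HasRadialGradientAt (fun p => -α p) (-a) (-b) q := by
  simpa using (hasDerivAt_neg (α q)).comp_hasRadialGradientAt hα

end HasRadialGradientAt

end RadialGradient

lemma hasRadialGradientAt_rad_sq (q : ℍ[ℝ]) : HasRadialGradientAt (fun p => rad p ^ 2) 0 2 q := by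
  simp only [rad_eq_norm_im]
  refine hasRadialGradientAt_iff_hasFDerivAt.2 <|
    (imCLM.hasFDerivAt (x := q)).norm_sq.congr_fderiv ?_
  ext e; simp; ring

lemma hasRadialGradientAt_rad {q : ℍ[ℝ]} (hq : q.im ≠ 0) :
    HasRadialGradientAt rad 0 (rad q)⁻¹ q := by
  have hsqrt (p : ℍ[ℝ]) : √(rad p ^ 2) = rad p := Real.sqrt_sq (Real.sqrt_nonneg _)
  have h := (Real.hasDerivAt_sqrt (pow_ne_zero 2 (rad_ne_zero hq))).comp_hasRadialGradientAt
    (hasRadialGradientAt_rad_sq q)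
  simp only [hsqrt] at h
  convert h using 1
  · simp
  · field_simp

section Congr

variable {q : ℍ[ℝ]}

lemma dl_congr {f g : ℍ[ℝ] → ℍ[ℝ]} (h : f =ᶠ[𝓝 q] g) : Dl f q = Dl g q := by
  simp only [Dl, pt, px, py, pz, h.fderiv_eq]

lemma dr_congr {f g : ℍ[ℝ] → ℍ[ℝ]} (h : f =ᶠ[𝓝 q] g) : Dr f q = Dr g q := by
  simp only [Dr, pt, px, py, pz, h.fderiv_eq]

lemma lap_congr {f g : ℍ[ℝ] → ℍ[ℝ]} (h : f =ᶠ[𝓝 q] g) : Lap f =ᶠ[𝓝 q] Lap g := by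
  have h₂ (e : ℍ[ℝ]) : (fun p => fderiv ℝ (fun p' => fderiv ℝ f p' e) p e) =ᶠ[𝓝 q]
      fun p => fderiv ℝ (fun p' => fderiv ℝ g p' e) p e :=
    ((h.fderiv.fun_comp (· e)).fderiv).fun_comp (· e)
  filter_upwards [h₂ 1, h₂ qi, h₂ qj, h₂ qk] with p h₁ hi hj hk
  unfold Lap pt px py pz
  rw [h₁, hi, hj, hk]

end Congr

def axial (α β : ℍ[ℝ] → ℝ) (q : ℍ[ℝ]) : ℍ[ℝ] := (α q : ℍ[ℝ]) + β q • q.im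

section Axial

variable {α β : ℍ[ℝ] → ℝ} {q : ℍ[ℝ]}

lemma hasFDerivAt_axial {α' β' : ℍ[ℝ] →L[ℝ] ℝ} (hα : HasFDerivAt α α' q)
    (hβ : HasFDerivAt β β' q) :
    HasFDerivAt (axial α β) (α'.smulRight 1 + (β q • imCLM + β'.smulRight q.im)) q := by
  have h : axial α β = fun p => α p • (1 : ℍ[ℝ]) + β p • imCLM p := by
    funext p; ext <;> simp [axial]
  exact h ▸ (hα.smul_const 1).add (hβ.smul imCLM.hasFDerivAt)

lemma fderiv_axial_apply {a₁ a₂ b₁ b₂ : ℝ} (hα : HasRadialGradientAt α a₁ a₂ q)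
    (hβ : HasRadialGradientAt β b₁ b₂ q) (e : ℍ[ℝ]) :
    fderiv ℝ (axial α β) q e = ((a₁ * e.re + a₂ * ⟪q.im, e⟫ : ℝ) : ℍ[ℝ])
      + (b₁ * e.re + b₂ * ⟪q.im, e⟫) • q.im + β q • e.im := by
  rw [(hasFDerivAt_axial hα.hasFDerivAt hβ.hasFDerivAt).fderiv]
  ext <;> simp <;> ring

lemma dl_axial {a₁ a₂ b₁ b₂ : ℝ} (hα : HasRadialGradientAt α a₁ a₂ q)
    (hβ : HasRadialGradientAt β b₁ b₂ q) :
    Dl (axial α β) q = ((a₁ - rad q ^ 2 * b₂ - 3 * β q : ℝ) : ℍ[ℝ]) + (b₁ + a₂) • q.im := by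
  simp only [Dl, pt, px, py, pz, fderiv_axial_apply hα hβ]
  ext <;> simp [rad_sq, -Quaternion.coe_pow] <;> ring

lemma dr_axial {a₁ a₂ b₁ b₂ : ℝ} (hα : HasRadialGradientAt α a₁ a₂ q)
    (hβ : HasRadialGradientAt β b₁ b₂ q) :
    Dr (axial α β) q = ((a₁ - rad q ^ 2 * b₂ - 3 * β q : ℝ) : ℍ[ℝ]) + (b₁ + a₂) • q.im := by
  simp only [Dr, pt, px, py, pz, fderiv_axial_apply hα hβ]
  ext <;> simp [rad_sq, -Quaternion.coe_pow] <;> ring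

lemma hasFDerivAt_inner_im (e q : ℍ[ℝ]) : HasFDerivAt (fun p => ⟪p.im, e⟫) (innerSL ℝ e.im) q := by
  have h : (fun p => ⟪p.im, e⟫) = innerSL ℝ e.im :=
    funext fun p => inner_im_left_eq_inner_im_right p e
  exact h ▸ (innerSL ℝ e.im).hasFDerivAt

lemma fderiv_fderiv_axial_apply_self {a₁ a₂ b₁ b₂ : ℍ[ℝ] → ℝ}
    (hα : ∀ᶠ p in 𝓝 q, HasRadialGradientAt α (a₁ p) (a₂ p) p)
    (hβ : ∀ᶠ p in 𝓝 q, HasRadialGradientAt β (b₁ p) (b₂ p) p)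
    (ha₁ : DifferentiableAt ℝ a₁ q) (ha₂ : DifferentiableAt ℝ a₂ q)
    (hb₁ : DifferentiableAt ℝ b₁ q) (hb₂ : DifferentiableAt ℝ b₂ q) (e : ℍ[ℝ]) :
    fderiv ℝ (fun p => fderiv ℝ (axial α β) p e) q e =
      ((e.re * fderiv ℝ a₁ q e + ⟪q.im, e⟫ * fderiv ℝ a₂ q e + a₂ q * ⟪e.im, e⟫ : ℝ) : ℍ[ℝ])
      + (e.re * fderiv ℝ b₁ q e + ⟪q.im, e⟫ * fderiv ℝ b₂ q e + b₂ q * ⟪e.im, e⟫) • q.im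
      + (2 * (b₁ q * e.re + b₂ q * ⟪q.im, e⟫)) • e.im := by
  have hdir : (fun p => fderiv ℝ (axial α β) p e) =ᶠ[𝓝 q] fun p =>
      axial (fun p => a₁ p * e.re + a₂ p * ⟪p.im, e⟫) (fun p => b₁ p * e.re + b₂ p * ⟪p.im, e⟫) p
        + β p • e.im := by
    filter_upwards [hα, hβ] with p hαp hβp
    rw [fderiv_axial_apply hαp hβp]
    rfl
  have hcoef {c₁ c₂ : ℍ[ℝ] → ℝ} (h₁ : DifferentiableAt ℝ c₁ q) (h₂ : DifferentiableAt ℝ c₂ q) :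
      HasFDerivAt (fun p => c₁ p * e.re + c₂ p * ⟪p.im, e⟫) _ q :=
    (h₁.hasFDerivAt.mul_const e.re).fun_add (h₂.hasFDerivAt.fun_mul (hasFDerivAt_inner_im e q))
  rw [hdir.fderiv_eq, ((hasFDerivAt_axial (hcoef ha₁ ha₂) (hcoef hb₁ hb₂)).fun_add
    (hβ.self_of_nhds.hasFDerivAt.smul_const e.im)).fderiv]
  ext <;> simp [-Quaternion.coe_pow] <;> ring

/-- With `a₂ = r⁻¹ ∂_r α` and `b₂ = r⁻¹ ∂_r β`, the two parts are
`α_tt + α_rr + 2 α_r / r` and `β_tt + β_rr + 4 β_r / r`. -/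
lemma lap_axial {a₁ a₂ b₁ b₂ : ℍ[ℝ] → ℝ}
    (hα : ∀ᶠ p in 𝓝 q, HasRadialGradientAt α (a₁ p) (a₂ p) p)
    (hβ : ∀ᶠ p in 𝓝 q, HasRadialGradientAt β (b₁ p) (b₂ p) p)
    (ha₁ : DifferentiableAt ℝ a₁ q) (ha₂ : DifferentiableAt ℝ a₂ q)
    (hb₁ : DifferentiableAt ℝ b₁ q) (hb₂ : DifferentiableAt ℝ b₂ q) :
    Lap (axial α β) q = ((fderiv ℝ a₁ q 1 + fderiv ℝ a₂ q q.im + 3 * a₂ q : ℝ) : ℍ[ℝ])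
      + (fderiv ℝ b₁ q 1 + fderiv ℝ b₂ q q.im + 5 * b₂ q) • q.im := by
  have h := fderiv_fderiv_axial_apply_self hα hβ ha₁ ha₂ hb₁ hb₂
  have hlin (L : ℍ[ℝ] →L[ℝ] ℝ) : L q.im = q.imI * L qi + q.imJ * L qj + q.imK * L qk := by
    rw [im_eq_sum_basis]; simp
  unfold Lap pt px py pz
  rw [h 1, h qi, h qj, h qk, hlin (fderiv ℝ a₂ q), hlin (fderiv ℝ b₂ q)]
  ext <;> simp [-Quaternion.coe_pow] <;> ring

end Axial

def toComplex (q : ℍ[ℝ]) : ℂ := ⟨q.re, rad q⟩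

/- For `H = u + i v`, read at `t + i r = toComplex q`: `fueterU H = u`, `fueterV H = v / r`, and,
by the Cauchy–Riemann equation `∂_r v = Re H'`, `fueterW H = r⁻¹ ∂_r (v / r)`. -/
def fueterU (H : ℂ → ℂ) (q : ℍ[ℝ]) : ℝ := (H (toComplex q)).re

def fueterV (H : ℂ → ℂ) (q : ℍ[ℝ]) : ℝ := (H (toComplex q)).im / rad q

def fueterW (H : ℂ → ℂ) (q : ℍ[ℝ]) : ℝ := (fueterU (deriv H) q - fueterV H q) / rad q ^ 2

def fueterMap (H : ℂ → ℂ) : ℍ[ℝ] → ℍ[ℝ] := axial (fueterU H) (fueterV H)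

lemma fueterMap_apply (H : ℂ → ℂ) (q : ℍ[ℝ]) :
    fueterMap H q = ((H (toComplex q)).re : ℍ[ℝ]) + iot q * ((H (toComplex q)).im : ℍ[ℝ]) := by
  rw [iot, Quaternion.mul_coe_eq_smul, smul_smul, fueterMap, axial, fueterU, fueterV,
    div_eq_mul_inv]

section Holomorphic

variable {H : ℂ → ℂ} {q : ℍ[ℝ]}

lemma toComplex_im_pos (hq : q.im ≠ 0) : 0 < (toComplex q).im :=
  (Real.sqrt_nonneg _).lt_of_ne (rad_ne_zero hq).symm

lemma differentiableAt_toComplex (hH : DifferentiableOn ℂ H UpperHalfPlane.upperHalfPlaneSet)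
    (hq : q.im ≠ 0) : DifferentiableAt ℂ H (toComplex q) :=
  hH.differentiableAt (UpperHalfPlane.isOpen_upperHalfPlaneSet.mem_nhds (toComplex_im_pos hq))

lemma hasFDerivAt_comp_toComplex (hH : DifferentiableAt ℂ H (toComplex q)) (hq : q.im ≠ 0) :
    HasFDerivAt (fun p => H (toComplex p)) (deriv H (toComplex q) •
      ((innerSL ℝ (1 : ℍ[ℝ])).smulRight (1 : ℂ) +
        ((rad q)⁻¹ • innerSL ℝ q.im).smulRight Complex.I)) q := by
  have hre : (fun p : ℍ[ℝ] => p.re) = innerSL ℝ (1 : ℍ[ℝ]) :=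
    funext fun p => (inner_one_left p).symm
  have hz : toComplex = fun p => p.re • (1 : ℂ) + rad p • Complex.I := by
    funext p; apply Complex.ext <;> simp [toComplex]
  have h := ((hre ▸ (innerSL ℝ (1 : ℍ[ℝ])).hasFDerivAt).smul_const (1 : ℂ)).fun_add
    ((hasRadialGradientAt_rad hq).hasFDerivAt.smul_const Complex.I)
  rw [← hz] at h
  refine ((hH.hasDerivAt.hasFDerivAt.restrictScalars ℝ).comp q h).congr_fderiv ?_
  ext e; simp [mul_comm]

lemma hasRadialGradientAt_fueterU (hH : DifferentiableAt ℂ H (toComplex q)) (hq : q.im ≠ 0) :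
    HasRadialGradientAt (fueterU H) (fueterU (deriv H) q) (-fueterV (deriv H) q) q :=
  hasRadialGradientAt_iff_hasFDerivAt.2 <|
    (Complex.reCLM.hasFDerivAt.comp q (hasFDerivAt_comp_toComplex hH hq)).congr_fderiv <| by
      ext e; simp [fueterU, fueterV]; ring

lemma hasRadialGradientAt_fueterV (hH : DifferentiableAt ℂ H (toComplex q)) (hq : q.im ≠ 0) :
    HasRadialGradientAt (fueterV H) (fueterV (deriv H) q) (fueterW H q) q := by
  have him : HasRadialGradientAt (fun p => (H (toComplex p)).im)
      (deriv H (toComplex q)).im (fueterU (deriv H) q / rad q) q :=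
    hasRadialGradientAt_iff_hasFDerivAt.2 <|
      (Complex.imCLM.hasFDerivAt.comp q (hasFDerivAt_comp_toComplex hH hq)).congr_fderiv <| by
        ext e; simp [fueterU]; ring
  have hr := rad_ne_zero hq
  convert him.div (hasRadialGradientAt_rad hq) hr using 1
  · rfl
  · simp only [fueterV]; field_simp; ring
  · simp only [fueterW, fueterV]; field_simp

lemma hasRadialGradientAt_fueterW (hH : DifferentiableAt ℂ H (toComplex q))
    (hH' : DifferentiableAt ℂ (deriv H) (toComplex q)) (hq : q.im ≠ 0) :
    HasRadialGradientAt (fueterW H) (fueterW (deriv H) q)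
      (-(fueterV (deriv (deriv H)) q + 3 * fueterW H q) / rad q ^ 2) q := by
  have h := ((hasRadialGradientAt_fueterU hH' hq).sub (hasRadialGradientAt_fueterV hH hq)).div
    (hasRadialGradientAt_rad_sq q) (pow_ne_zero 2 (rad_ne_zero hq))
  have hr := rad_ne_zero hq
  convert h using 1
  · rfl
  · simp only [fueterW]; field_simp; ring
  · simp only [fueterW]; field_simp; ring

lemma lap_fueterMap (hH : DifferentiableOn ℂ H UpperHalfPlane.upperHalfPlaneSet) (hq : q.im ≠ 0) :
    Lap (fueterMap H) q =
      axial (fun p => -2 * fueterV (deriv H) p) (fun p => 2 * fueterW H p) q := by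
  have hH' := hH.deriv UpperHalfPlane.isOpen_upperHalfPlaneSet
  have hU' := hasRadialGradientAt_fueterU (differentiableAt_toComplex hH' hq) hq
  have hV' := hasRadialGradientAt_fueterV (differentiableAt_toComplex hH' hq) hq
  have hW := hasRadialGradientAt_fueterW (differentiableAt_toComplex hH hq)
    (differentiableAt_toComplex hH' hq) hq
  rw [fueterMap, lap_axial
    ((eventually_im_ne_zero hq).mono fun p hp =>
      hasRadialGradientAt_fueterU (differentiableAt_toComplex hH hp) hp)
    ((eventually_im_ne_zero hq).mono fun p hp =>
      hasRadialGradientAt_fueterV (differentiableAt_toComplex hH hp) hp)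
    hU'.differentiableAt hV'.neg.differentiableAt hV'.differentiableAt hW.differentiableAt,
    hU'.fderiv_one, hV'.neg.fderiv_im, hV'.fderiv_one, hW.fderiv_im]
  have hr := rad_ne_zero hq
  simp only [axial, fueterW]
  congr 2 <;> field_simp <;> ring

lemma dl_and_dr_lap_fueterMap_eq_zero (hH : DifferentiableOn ℂ H UpperHalfPlane.upperHalfPlaneSet)
    (hq : q.im ≠ 0) : Dl (Lap (fueterMap H)) q = 0 ∧ Dr (Lap (fueterMap H)) q = 0 := by
  have hLap := (eventually_im_ne_zero hq).mono fun p hp => lap_fueterMap hH hp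
  have hH' := hH.deriv UpperHalfPlane.isOpen_upperHalfPlaneSet
  have hα := (hasRadialGradientAt_fueterV (differentiableAt_toComplex hH' hq) hq).const_mul (-2)
  have hβ := (hasRadialGradientAt_fueterW (differentiableAt_toComplex hH hq)
    (differentiableAt_toComplex hH' hq) hq).const_mul 2
  have hr := rad_ne_zero hq
  have hscalar : -2 * fueterV (deriv (deriv H)) q
      - rad q ^ 2 * (2 * (-(fueterV (deriv (deriv H)) q + 3 * fueterW H q) / rad q ^ 2))
      - 3 * (2 * fueterW H q) = 0 := by
    field_simp; ring
  rw [dl_congr hLap, dr_congr hLap, dl_axial hα hβ, dr_axial hα hβ, hscalar]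
  simp

end Holomorphic

end Fueter

open Fueter

/-- **Fueter's theorem.** If `F = u + iv` is holomorphic on the upper half plane
and `f(p) = u(t,r) + ι(p) v(t,r)` is obtained by Fueter's construction, then `D_l (Δf) = 0` and
`D_r (Δf) = 0` on the set of quaternions with nonzero imaginary part. -/
theorem fueter_theorem
    (F : ℂ → ℂ) (hF : DifferentiableOn ℂ F {z : ℂ | 0 < z.im})
    (f : ℍ[ℝ] → ℍ[ℝ])
    (hf : ∀ p : ℍ[ℝ], Quaternion.im p ≠ 0 →
      f p = ((F ⟨p.re, rad p⟩).re : ℍ[ℝ]) + iot p * ((F ⟨p.re, rad p⟩).im : ℍ[ℝ])) :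
    ∀ p : ℍ[ℝ], Quaternion.im p ≠ 0 → Dl (Lap f) p = 0 ∧ Dr (Lap f) p = 0 := by
  intro p hp
  have hfF : f =ᶠ[𝓝 p] fueterMap F :=
    (eventually_im_ne_zero hp).mono fun q hq => (hf q hq).trans (fueterMap_apply F q).symm
  rw [dl_congr (lap_congr hfF), dr_congr (lap_congr hfF)]
  exact dl_and_dr_lap_fueterMap_eq_zero hF hp
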